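/- arXiv:1812.09388 — 2 statements merged into one kernel-verified Lean document; each statement's English description precedes it below -/
import Mathlib

section
/- (Lemma 2.1) Let D = sup{|x−y| : x,y ∈ Ω̄} be the diameter of Ω. Suppose ‖E‖_∞ < ∞ and fix 0 < T < 1. Then for any (t,x,v) ∈ [0,T] × Ω̄ × ℝ³ one has ∫_{max{0, t−t_b(t,x,v)}}^{t} |V(s;t,x,v)| ds < 5t(‖E‖_∞ + D) + 4D. -/
open MeasureTheory Real
open scoped RealInnerProductSpace ENNReal

noncomputable section

abbrev E3 := EuclideanSpace ℝ (Fin 3)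

/-- The backward exit time `t_b(t,x,v)` of the characteristic trajectory `X(·;t,x,v)`
from the domain `Ω`. -/
def exitTime (Ω : Set E3) (X : ℝ → ℝ → E3 → E3 → E3) (t : ℝ) (x v : E3) : ℝ :=
  sSup {s : ℝ | 0 ≤ s ∧ ∀ τ ∈ Set.Ioo (t - s) t, X τ t x v ∈ Ω}

/-- **Lemma 2.1.** Let `D` be the diameter of `Ω` and suppose `‖E‖_∞ < ∞` and `0 < T < 1`.
Then for any `(t,x,v) ∈ [0,T] × Ω̄ × ℝ³`,
`∫_{max{0, t − t_b(t,x,v)}}^{t} |V(s;t,x,v)| ds < 5t(‖E‖_∞ + D) + 4D`. -/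
theorem lemma_2_1_velocity_time_integral_bound
    (ξ : E3 → ℝ) (hξ : ContDiff ℝ 3 ξ)
    (Ω : Set E3) (hΩ : Ω = {x | ξ x < 0}) (hbd : Bornology.IsBounded Ω)
    (D : ℝ) (hD : D = Metric.diam (closure Ω))
    (Efld : ℝ → E3 → E3) (EB : ℝ) (hEB : ∀ t x, ‖Efld t x‖ ≤ EB)
    (X V : ℝ → ℝ → E3 → E3 → E3)
    (hX : ∀ s t x v, HasDerivAt (fun σ => X σ t x v) (V s t x v) s)
    (hV : ∀ s t x v, HasDerivAt (fun σ => V σ t x v) (Efld s (X s t x v)) s)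
    (hXt : ∀ t x v, X t t x v = x)
    (hVt : ∀ t x v, V t t x v = v)
    (T : ℝ) (hT0 : 0 < T) (hT1 : T < 1) :
    ∀ t ∈ Set.Icc (0:ℝ) T, ∀ x ∈ closure Ω, ∀ v : E3,
      (∫ s in (max 0 (t - exitTime Ω X t x v))..t, ‖V s t x v‖)
        < 5 * t * (EB + D) + 4 * D := by
  intro t ht x hx v
  have ht0 : 0 ≤ t := ht.1
  have htT : t ≤ T := ht.2
  have hEB0 : 0 ≤ EB := le_trans (norm_nonneg _) (hEB 0 x)
  -- D > 0
  have hΩne : Ω.Nonempty := by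
    by_contra h
    rw [Set.not_nonempty_iff_eq_empty] at h
    rw [h, closure_empty] at hx
    exact hx
  have hΩopen : IsOpen Ω := by
    rw [hΩ]; exact isOpen_lt hξ.continuous continuous_const
  have hD0 : 0 < D := by
    obtain ⟨y, hy⟩ := hΩne
    obtain ⟨ε, hε, hball⟩ := Metric.isOpen_iff.mp hΩopen y hy
    set z : E3 := y + EuclideanSpace.single (0 : Fin 3) (ε / 2) with hz
    have hzmem : z ∈ Ω := by
      apply hball
      rw [Metric.mem_ball, dist_eq_norm, hz, add_sub_cancel_left,
        EuclideanSpace.norm_single, Real.norm_eq_abs, abs_of_pos (by linarith)]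
      linarith
    have hdist : dist z y ≤ Metric.diam (closure Ω) :=
      Metric.dist_le_diam_of_mem hbd.closure (subset_closure hzmem) (subset_closure hy)
    have hdzy : dist z y = ε / 2 := by
      rw [dist_eq_norm, hz, add_sub_cancel_left, EuclideanSpace.norm_single,
        Real.norm_eq_abs, abs_of_pos (by linarith)]
    rw [hD]; linarith
  -- continuity of trajectories
  have hcontV : Continuous fun s => V s t x v :=
    continuous_iff_continuousAt.mpr fun s => (hV s t x v).continuousAt
  have hcontX : Continuous fun s => X s t x v :=
    continuous_iff_continuousAt.mpr fun s => (hX s t x v).continuousAt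
  -- Lipschitz bound on V
  have hVlip : ∀ s : ℝ, ‖V s t x v - v‖ ≤ EB * |t - s| := by
    intro s
    have := Convex.norm_image_sub_le_of_norm_hasDerivWithin_le
      (f := fun σ => V σ t x v) (f' := fun σ => Efld σ (X σ t x v)) (C := EB)
      (fun σ _ => (hV σ t x v).hasDerivWithinAt)
      (fun σ _ => hEB σ _) convex_univ (Set.mem_univ t) (Set.mem_univ s)
    simpa [hVt, Real.norm_eq_abs, abs_sub_comm] using this
  -- the main estimate, for any lower limit `a` such that the trajectory
  -- stays in `Ω` on `(a, t)`
  have main : ∀ a : ℝ, 0 ≤ a → a ≤ t → (∀ τ ∈ Set.Ioo a t, X τ t x v ∈ Ω) →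
      (∫ s in a..t, ‖V s t x v‖) < 5 * t * (EB + D) + 4 * D := by
    intro a ha0 hat hin
    have hs0 : 0 ≤ t - a := by linarith
    -- the trajectory stays in the closure on `[a, t]`
    have hXmem : ∀ τ ∈ Set.Icc a t, X τ t x v ∈ closure Ω := by
      intro τ hτ
      rcases eq_or_lt_of_le hτ.2 with h | h
      · rw [h, hXt]; exact hx
      · have hτcl : τ ∈ closure (Set.Ioo τ t) := by
          rw [closure_Ioo (ne_of_lt h)]
          exact ⟨le_refl τ, le_of_lt h⟩
        have hmem : X τ t x v ∈ closure ((fun σ => X σ t x v) '' Set.Ioo τ t) :=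
          hcontX.continuousWithinAt.mem_closure_image hτcl
        refine closure_mono ?_ hmem
        rintro _ ⟨σ, hσ, rfl⟩
        exact hin σ ⟨lt_of_le_of_lt hτ.1 hσ.1, hσ.2⟩
    have hXD : ‖x - X a t x v‖ ≤ D := by
      rw [hD, ← dist_eq_norm]
      exact Metric.dist_le_diam_of_mem hbd.closure hx (hXmem a ⟨le_refl a, hat⟩)
    -- FTC for X
    have hFTC : (∫ s in a..t, V s t x v) = x - X a t x v := by
      rw [intervalIntegral.integral_eq_sub_of_hasDerivAt
        (fun s _ => hX s t x v) (hcontV.intervalIntegrable a t), hXt]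
    -- bound on |v|
    have hdiff : ‖(t - a) • v - (x - X a t x v)‖ ≤ EB * (t - a) * (t - a) := by
      have heq : (t - a) • v - (x - X a t x v) = ∫ s in a..t, (v - V s t x v) := by
        rw [intervalIntegral.integral_sub (intervalIntegrable_const)
          (hcontV.intervalIntegrable a t), intervalIntegral.integral_const, hFTC]
      rw [heq]
      have hb : ∀ s ∈ Set.uIoc a t, ‖v - V s t x v‖ ≤ EB * (t - a) := by
        intro s hs
        rw [Set.uIoc_of_le hat] at hs
        have h1 : ‖v - V s t x v‖ ≤ EB * |t - s| := by
          rw [norm_sub_rev]; exact hVlip s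
        have h2 : |t - s| ≤ t - a := by
          rw [abs_of_nonneg (by linarith [hs.2])]
          linarith [hs.1]
        nlinarith
      have := intervalIntegral.norm_integral_le_of_norm_le_const hb
      rwa [abs_of_nonneg hs0] at this
    have hvnorm : (t - a) * ‖v‖ ≤ D + EB * (t - a) * (t - a) := by
      have h1 : ‖(t - a) • v‖ ≤ ‖x - X a t x v‖ + ‖(t - a) • v - (x - X a t x v)‖ := by
        calc ‖(t - a) • v‖ = ‖(x - X a t x v) + ((t - a) • v - (x - X a t x v))‖ := by
              congr 1; abel
          _ ≤ _ := norm_add_le _ _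
      rw [norm_smul, Real.norm_eq_abs, abs_of_nonneg hs0] at h1
      linarith
    -- bound the integral
    have hIb : (∫ s in a..t, ‖V s t x v‖) ≤ (t - a) * (‖v‖ + EB * (t - a)) := by
      have hmono := intervalIntegral.integral_mono_on hat
        (hcontV.norm.intervalIntegrable a t)
        (intervalIntegrable_const (μ := MeasureTheory.volume) (c := ‖v‖ + EB * (t - a)))
        (fun s hs => by
          have h1 : ‖V s t x v‖ ≤ ‖v‖ + ‖V s t x v - v‖ := by
            calc ‖V s t x v‖ = ‖v + (V s t x v - v)‖ := by congr 1; abel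
              _ ≤ _ := norm_add_le _ _
          have h2 : ‖V s t x v - v‖ ≤ EB * |t - s| := hVlip s
          have h3 : |t - s| ≤ t - a := by
            rw [abs_of_nonneg (by linarith [hs.2])]
            linarith [hs.1]
          nlinarith)
      rwa [intervalIntegral.integral_const, smul_eq_mul] at hmono
    -- conclude
    have hsq : (t - a) * (t - a) ≤ t := by nlinarith
    have hq : EB * (t - a) * (t - a) ≤ EB * t := by nlinarith
    have hv0 : 0 ≤ ‖v‖ := norm_nonneg v
    nlinarith [mul_nonneg hEB0 ht0, mul_nonneg hD0.le ht0]
  -- now analyse the exit time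
  set S := {s : ℝ | 0 ≤ s ∧ ∀ τ ∈ Set.Ioo (t - s) t, X τ t x v ∈ Ω} with hS
  have h0S : (0 : ℝ) ∈ S := ⟨le_refl 0, fun τ hτ => absurd (lt_trans hτ.1 hτ.2) (by simp)⟩
  have hexit : exitTime Ω X t x v = sSup S := rfl
  by_cases hbdd : BddAbove S
  · have htb0 : 0 ≤ sSup S := le_csSup hbdd h0S
    refine main (max 0 (t - exitTime Ω X t x v)) (le_max_left _ _) ?_ ?_
    · rw [hexit]
      exact max_le ht0 (by linarith)
    · intro τ hτ
      have hτ1 : t - exitTime Ω X t x v < τ :=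
        lt_of_le_of_lt (le_max_right _ _) hτ.1
      have h1 : t - τ < sSup S := by rw [hexit] at hτ1; linarith
      obtain ⟨s, hsS, hs⟩ := exists_lt_of_lt_csSup ⟨0, h0S⟩ h1
      exact hsS.2 τ ⟨by linarith, hτ.2⟩
  · have htb : exitTime Ω X t x v = 0 := by
      rw [hexit]; exact Real.sSup_of_not_bddAbove hbdd
    rw [htb, sub_zero, max_eq_right ht0]
    exact main t ht0 (le_refl t) (fun τ hτ => absurd (lt_trans hτ.1 hτ.2) (lt_irrefl t))

end
end

section
/- (Velocity integral with a grazing singularity) Let n ∈ ℝ³ be a unit vector, 0 ≤ κ ≤ 1, c > 0, and 0 < a < 1. Then sup_{v ∈ ℝ³} ∫_{ℝ³} |v − u|^{κ−2} e^{−c|v−u|²} |u·n|^{−a} du < ∞. In particular, for 0 < β < (p−1)/p and 1 < p < ∞, the integral ∫_{ℝ³} e^{−c|v−u|²} |v−u|^{κ−2} |u·n|^{−βp/(p−1)} du is finite uniformly in v. -/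
open MeasureTheory Real
open scoped RealInnerProductSpace ENNReal

noncomputable section

/-!
Since `‖d‖² = ∑ dᵢ²` and `|dᵢ| ≤ ‖d‖`, a split `2 - κ = e₀ + e₁ + e₂` with `eᵢ ≥ 0` gives
`‖d‖^(κ-2) e^{-c‖d‖²} ≤ ∏ᵢ |dᵢ|^(-eᵢ) e^{-c dᵢ²}`. After a reflection taking `n` to the first
basis vector, the kernel is therefore dominated by a product of one-dimensional kernels
`|x - t|^(-e) e^{-c(x-t)²} |t|^(-α)`, with `α = a` in the first coordinate and `α = 0` in the
others. The choice `e₀ = (1 - a)/2`, `e₁ = e₂ = (3 + a - 2κ)/4` keeps every `eᵢ + αᵢ < 1`, and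
then each one-dimensional integral is bounded uniformly in `x`: the two singularities combine as
`|x - t|^(-e) |t|^(-α) ≤ |x - t|^(-(e+α)) + |t|^(-(e+α))`, leaving translates of integrable
functions `|z|^(-m) e^{-cz²}`, `m < 1`.
-/

def singularGaussian (m b z : ℝ) : ℝ := |z| ^ (-m) * exp (-b * z ^ 2)

lemma singularGaussian_nonneg (m b z : ℝ) : 0 ≤ singularGaussian m b z := by
  unfold singularGaussian; positivity

lemma integrable_singularGaussian {m b : ℝ} (hm : m < 1) (hb : 0 < b) :
    Integrable (singularGaussian m b) := by
  have hIoi : IntegrableOn (singularGaussian m b) (Set.Ioi 0) :=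
    (integrableOn_rpow_mul_exp_neg_mul_sq hb (by linarith : (-1 : ℝ) < -m)).congr_fun
      (fun x hx => by rw [singularGaussian, abs_of_pos hx]) measurableSet_Ioi
  rw [← integrableOn_univ, ← Set.Iio_union_Ici (a := (0 : ℝ)), integrableOn_union,
    integrableOn_Ici_iff_integrableOn_Ioi]
  refine ⟨?_, hIoi⟩
  rw [← (Measure.measurePreserving_neg (volume : Measure ℝ)).integrableOn_comp_preimage
      (Homeomorph.neg ℝ).measurableEmbedding]
  simp only [Function.comp_def, singularGaussian, abs_neg, neg_sq, Set.neg_preimage, Set.neg_Iio,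
    neg_zero]
  exact hIoi

lemma rpow_neg_mul_rpow_neg_le_add {u w s a : ℝ} (hu : 0 ≤ u) (hw : 0 ≤ w) (hs : 0 < s)
    (ha : 0 ≤ a) : u ^ (-s) * w ^ (-a) ≤ u ^ (-(s + a)) + w ^ (-(s + a)) := by
  have hsum : 0 ≤ u ^ (-(s + a)) + w ^ (-(s + a)) := by positivity
  rcases hu.eq_or_lt with rfl | hu
  · rwa [zero_rpow (neg_ne_zero.2 hs.ne'), zero_mul]
  rcases hw.eq_or_lt with rfl | hw
  · rcases ha.eq_or_lt with rfl | ha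
    · rw [neg_zero, rpow_zero, mul_one, add_zero]
      exact le_add_of_nonneg_right (by positivity)
    · rwa [zero_rpow (neg_ne_zero.2 ha.ne'), mul_zero]
  have hmin : 0 < min u w := lt_min hu hw
  calc u ^ (-s) * w ^ (-a) ≤ min u w ^ (-s) * min u w ^ (-a) := by
        apply mul_le_mul _ _ (by positivity) (by positivity)
        · exact rpow_le_rpow_of_nonpos hmin (min_le_left u w) (by linarith)
        · exact rpow_le_rpow_of_nonpos hmin (min_le_right u w) (by linarith)
    _ = min u w ^ (-(s + a)) := by rw [← rpow_add hmin, neg_add]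
    _ ≤ u ^ (-(s + a)) + w ^ (-(s + a)) := by
        rcases min_choice u w with h | h <;> rw [h] <;> linarith [rpow_nonneg hu.le (-(s + a)),
          rpow_nonneg hw.le (-(s + a))]

/-- For `|t| ≤ 1` the Gaussian factor of `singularGaussian m b t` is at least `exp (-b)`; for
`|t| > 1` the power `|t|^(-m)` is at most `1`. -/
lemma abs_rpow_neg_mul_le {m b E : ℝ} (t : ℝ) (hm : 0 ≤ m) (hb : 0 ≤ b) (hE0 : 0 ≤ E)
    (hE1 : E ≤ 1) : |t| ^ (-m) * E ≤ exp b * singularGaussian m b t + E := by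
  rcases le_or_gt |t| 1 with ht | ht
  · have hexp : 1 ≤ exp b * exp (-b * t ^ 2) := by
      have ht2 : t ^ 2 ≤ 1 := by nlinarith [sq_abs t, abs_nonneg t]
      rw [← exp_add, one_le_exp_iff]
      nlinarith [mul_nonneg hb (sub_nonneg.2 ht2)]
    calc |t| ^ (-m) * E ≤ |t| ^ (-m) * (exp b * exp (-b * t ^ 2)) := by
          gcongr; linarith
      _ ≤ exp b * singularGaussian m b t + E := by
          rw [singularGaussian]; linarith
  · have hpow : |t| ^ (-m) ≤ 1 := rpow_le_one_of_one_le_of_nonpos ht.le (by linarith)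
    have hG : 0 ≤ exp b * singularGaussian m b t :=
      mul_nonneg (exp_pos b).le (singularGaussian_nonneg m b t)
    nlinarith

section Convolution

variable {s a b : ℝ}

lemma singularGaussian_sub_mul_abs_rpow_le (hs : 0 < s) (ha : 0 ≤ a) (hb : 0 ≤ b) (x t : ℝ) :
    singularGaussian s b (x - t) * |t| ^ (-a) ≤
      singularGaussian (s + a) b (x - t) + exp b * singularGaussian (s + a) b t +
        singularGaussian 0 b (x - t) := by
  have hE0 : 0 ≤ exp (-b * (x - t) ^ 2) := (exp_pos _).le
  have hE1 : exp (-b * (x - t) ^ 2) ≤ 1 := by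
    rw [exp_le_one_iff]; nlinarith [sq_nonneg (x - t)]
  calc singularGaussian s b (x - t) * |t| ^ (-a)
      = |x - t| ^ (-s) * |t| ^ (-a) * exp (-b * (x - t) ^ 2) := by
        rw [singularGaussian]; ring
    _ ≤ (|x - t| ^ (-(s + a)) + |t| ^ (-(s + a))) * exp (-b * (x - t) ^ 2) := by
        gcongr; exact rpow_neg_mul_rpow_neg_le_add (abs_nonneg _) (abs_nonneg _) hs ha
    _ ≤ singularGaussian (s + a) b (x - t) +
          (exp b * singularGaussian (s + a) b t + exp (-b * (x - t) ^ 2)) := by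
        rw [add_mul, singularGaussian]
        gcongr
        exact abs_rpow_neg_mul_le t (by linarith) hb hE0 hE1
    _ = _ := by simp only [singularGaussian, neg_zero, rpow_zero, one_mul]; ring

lemma integrable_singularGaussian_majorant (hsa : s + a < 1) (hb : 0 < b) (x : ℝ) :
    Integrable fun t => singularGaussian (s + a) b (x - t) + exp b * singularGaussian (s + a) b t +
      singularGaussian 0 b (x - t) :=
  ((integrable_singularGaussian hsa hb).comp_sub_left x |>.add
    ((integrable_singularGaussian hsa hb).const_mul _)).add
    ((integrable_singularGaussian (by norm_num) hb).comp_sub_left x)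

lemma integrable_singularGaussian_sub_mul_abs_rpow (hs : 0 < s) (ha : 0 ≤ a) (hsa : s + a < 1)
    (hb : 0 < b) (x : ℝ) : Integrable fun t => singularGaussian s b (x - t) * |t| ^ (-a) := by
  refine (integrable_singularGaussian_majorant hsa hb x).mono'
    (by unfold singularGaussian; fun_prop) (ae_of_all _ fun t => ?_)
  rw [Real.norm_of_nonneg (mul_nonneg (singularGaussian_nonneg _ _ _) (by positivity))]
  exact singularGaussian_sub_mul_abs_rpow_le hs ha hb.le x t

lemma integral_singularGaussian_sub_mul_abs_rpow_le (hs : 0 < s) (ha : 0 ≤ a) (hsa : s + a < 1)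
    (hb : 0 < b) (x : ℝ) :
    ∫ t, singularGaussian s b (x - t) * |t| ^ (-a) ≤
      (1 + exp b) * (∫ z, singularGaussian (s + a) b z) + ∫ z, singularGaussian 0 b z := by
  have hm := integrable_singularGaussian hsa hb
  have h1 : Integrable fun t => singularGaussian (s + a) b (x - t) := hm.comp_sub_left x
  have h2 : Integrable fun t => exp b * singularGaussian (s + a) b t := hm.const_mul _
  have h12 : Integrable fun t => singularGaussian (s + a) b (x - t) +
      exp b * singularGaussian (s + a) b t := h1.add h2
  have h3 : Integrable fun t => singularGaussian 0 b (x - t) :=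
    (integrable_singularGaussian (by norm_num) hb).comp_sub_left x
  calc ∫ t, singularGaussian s b (x - t) * |t| ^ (-a)
      ≤ ∫ t, (singularGaussian (s + a) b (x - t) + exp b * singularGaussian (s + a) b t +
          singularGaussian 0 b (x - t)) :=
        integral_mono (integrable_singularGaussian_sub_mul_abs_rpow hs ha hsa hb x)
          (integrable_singularGaussian_majorant hsa hb x)
          (singularGaussian_sub_mul_abs_rpow_le hs ha hb.le x)
    _ = _ := by
        rw [integral_add h12 h3, integral_add h1 h2, integral_const_mul,
          integral_sub_left_eq_self, integral_sub_left_eq_self]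
        ring

end Convolution

lemma norm_rpow_neg_sum_mul_exp_le_prod {ι : Type*} [Fintype ι] {d : EuclideanSpace ℝ ι}
    (hd : ∀ i, d i ≠ 0) {e : ι → ℝ} (he : ∀ i, 0 ≤ e i) (b : ℝ) :
    ‖d‖ ^ (-∑ i, e i) * exp (-b * ‖d‖ ^ 2) ≤ ∏ i, singularGaussian (e i) b (d i) := by
  have hsplit : ‖d‖ ^ (-∑ i, e i) * exp (-b * ‖d‖ ^ 2) =
      ∏ i, ‖d‖ ^ (-e i) * exp (-b * d i ^ 2) := by
    rw [rpow_neg (norm_nonneg d), rpow_sum_of_nonneg (norm_nonneg d) fun i _ => he i,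
      EuclideanSpace.norm_sq_eq, Finset.mul_sum, exp_sum, Finset.prod_mul_distrib,
      ← Finset.prod_inv_distrib]
    simp only [← rpow_neg (norm_nonneg d), Real.norm_eq_abs, sq_abs]
  rw [hsplit]
  refine Finset.prod_le_prod (fun i _ => by positivity) fun i _ => ?_
  exact mul_le_mul_of_nonneg_right (rpow_le_rpow_of_nonpos (abs_pos.2 (hd i))
    (PiLp.norm_apply_le d i) (neg_nonpos.2 (he i))) (exp_pos _).le

theorem lintegral_norm_rpow_mul_exp_mul_prod_abs_rpow_le {ι : Type*} [Fintype ι] {e α : ι → ℝ}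
    {b : ℝ} (he : ∀ i, 0 < e i) (hα : ∀ i, 0 ≤ α i) (heα : ∀ i, e i + α i < 1) (hb : 0 < b) :
    ∃ C : ℝ≥0∞, C < ⊤ ∧ ∀ w : EuclideanSpace ℝ ι,
      ∫⁻ u, ENNReal.ofReal (‖w - u‖ ^ (-∑ i, e i) * exp (-b * ‖w - u‖ ^ 2) *
        ∏ i, |u i| ^ (-α i)) ≤ C := by
  refine ⟨ENNReal.ofReal (∏ i, ((1 + exp b) * (∫ z, singularGaussian (e i + α i) b z) +
    ∫ z, singularGaussian 0 b z)), ENNReal.ofReal_lt_top, fun w => ?_⟩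
  set G : ι → ℝ → ℝ := fun i t => singularGaussian (e i) b (w i - t) * |t| ^ (-α i) with hG
  have hG_int : ∀ i, Integrable (G i) := fun i =>
    integrable_singularGaussian_sub_mul_abs_rpow (he i) (hα i) (heα i) hb (w i)
  have hG_nonneg : ∀ i t, 0 ≤ G i t := fun i t =>
    mul_nonneg (singularGaussian_nonneg _ _ _) (by positivity)
  have hG_prod : Integrable fun x : ι → ℝ => ∏ i, G i (x i) := Integrable.fintype_prod hG_int
  have hbound : ∀ᵐ x : ι → ℝ, ENNReal.ofReal (‖w - WithLp.toLp 2 x‖ ^ (-∑ i, e i) *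
      exp (-b * ‖w - WithLp.toLp 2 x‖ ^ 2) * ∏ i, |x i| ^ (-α i)) ≤
        ENNReal.ofReal (∏ i, G i (x i)) := by
    filter_upwards [ae_all_iff.2 fun i => Measure.ae_eval_ne _ i (w i)] with x hx
    refine ENNReal.ofReal_le_ofReal ?_
    simp only [hG, Finset.prod_mul_distrib]
    gcongr
    exact norm_rpow_neg_sum_mul_exp_le_prod (fun i => sub_ne_zero.2 (hx i).symm)
      (fun i => (he i).le) b
  calc ∫⁻ u, ENNReal.ofReal (‖w - u‖ ^ (-∑ i, e i) * exp (-b * ‖w - u‖ ^ 2) *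
        ∏ i, |u i| ^ (-α i))
      = ∫⁻ x : ι → ℝ, ENNReal.ofReal (‖w - WithLp.toLp 2 x‖ ^ (-∑ i, e i) *
          exp (-b * ‖w - WithLp.toLp 2 x‖ ^ 2) * ∏ i, |x i| ^ (-α i)) :=
        ((PiLp.volume_preserving_toLp ι).lintegral_comp_emb
          (MeasurableEquiv.toLp 2 (ι → ℝ)).measurableEmbedding _).symm
    _ ≤ ∫⁻ x : ι → ℝ, ENNReal.ofReal (∏ i, G i (x i)) := lintegral_mono_ae hbound
    _ = ENNReal.ofReal (∏ i, ∫ t, G i t) := by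
        rw [← ofReal_integral_eq_lintegral_ofReal hG_prod
          (ae_of_all _ fun x => Finset.prod_nonneg fun i _ => hG_nonneg i (x i)),
          integral_fintype_prod_volume_eq_prod]
    _ ≤ _ := ENNReal.ofReal_le_ofReal <| Finset.prod_le_prod
        (fun i _ => integral_nonneg (hG_nonneg i))
        (fun i _ => integral_singularGaussian_sub_mul_abs_rpow_le (he i) (hα i) (heα i) hb (w i))

lemma lintegral_norm_sub_inner_map_eq {E : Type*} [NormedAddCommGroup E] [InnerProductSpace ℝ E]
    [FiniteDimensional ℝ E] [MeasurableSpace E] [BorelSpace E] (F : ℝ → ℝ → ℝ≥0∞)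
    (f : E ≃ₗᵢ[ℝ] E) (v n : E) :
    ∫⁻ u, F ‖v - u‖ ⟪u, f n⟫ = ∫⁻ u, F ‖f.symm v - u‖ ⟪u, n⟫ := by
  refine (f.measurePreserving.lintegral_comp_emb f.toHomeomorph.measurableEmbedding _).symm.trans
    (lintegral_congr fun u => ?_)
  rw [f.inner_map_map, ← f.norm_map (f.symm v - u), map_sub, f.apply_symm_apply]

theorem lintegral_grazing_kernel_le {n : E3} (hn : ‖n‖ = 1) {κ c a : ℝ} (hκ0 : 0 ≤ κ)
    (hκ1 : κ ≤ 1) (hc : 0 < c) (ha : 0 < a) (ha1 : a < 1) :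
    ∃ C : ℝ≥0∞, C < ⊤ ∧ ∀ v : E3, ∫⁻ u : E3, ENNReal.ofReal
      (‖v - u‖ ^ (κ - 2) * exp (-c * ‖v - u‖ ^ 2) * |⟪u, n⟫| ^ (-a)) ≤ C := by
  let e : Fin 3 → ℝ := fun i => if i = 0 then (1 - a) / 2 else (3 + a - 2 * κ) / 4
  let α : Fin 3 → ℝ := fun i => if i = 0 then a else 0
  have hsum : -∑ i, e i = κ - 2 := by
    rw [Fin.sum_univ_three]
    show -((1 - a) / 2 + (3 + a - 2 * κ) / 4 + (3 + a - 2 * κ) / 4) = κ - 2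
    ring
  have hprod (u : E3) : ∏ i, |u i| ^ (-α i) = |u 0| ^ (-a) := by
    simp [α, Fin.prod_univ_three]
  obtain ⟨C, hC, hbound⟩ := lintegral_norm_rpow_mul_exp_mul_prod_abs_rpow_le (e := e) (α := α)
    (fun i => by dsimp only [e]; split_ifs <;> linarith)
    (fun i => by dsimp only [α]; split_ifs <;> linarith)
    (fun i => by dsimp only [e, α]; split_ifs <;> linarith) hc
  refine ⟨C, hC, fun v => ?_⟩
  obtain ⟨f, hf⟩ : ∃ f : E3 ≃ₗᵢ[ℝ] E3, f (EuclideanSpace.single 0 1) = n :=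
    ⟨_, Submodule.reflection_sub (by simp [hn])⟩
  rw [← hf, lintegral_norm_sub_inner_map_eq (fun r y => ENNReal.ofReal
    (r ^ (κ - 2) * exp (-c * r ^ 2) * |y| ^ (-a)))]
  simpa [hsum, hprod, EuclideanSpace.inner_single_right] using hbound (f.symm v)

/-- **Velocity integral with a grazing singularity.**
For a unit vector `n`, `0 ≤ κ ≤ 1`, `c > 0`, `0 < a < 1`:
`sup_v ∫_{ℝ³} |v−u|^{κ−2} e^{−c|v−u|²} |u·n|^{−a} du < ∞`.
In particular, for `1 < p < ∞` and `0 < β < (p−1)/p`, the integral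
`∫ e^{−c|v−u|²} |v−u|^{κ−2} |u·n|^{−βp/(p−1)} du` is finite uniformly in `v`. -/
theorem velocity_integral_grazing_singularity
    (n : E3) (hn : ‖n‖ = 1)
    (κ : ℝ) (hκ0 : 0 ≤ κ) (hκ1 : κ ≤ 1)
    (c : ℝ) (hc : 0 < c) :
    (∀ a : ℝ, 0 < a → a < 1 →
      ∃ C : ℝ≥0∞, C < ⊤ ∧ ∀ v : E3,
        (∫⁻ u : E3, ENNReal.ofReal
          (‖v - u‖ ^ (κ - 2) * Real.exp (-c * ‖v - u‖ ^ 2) * |⟪u, n⟫| ^ (-a))) ≤ C) ∧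
    (∀ p : ℝ, 1 < p → ∀ β : ℝ, 0 < β → β < (p - 1) / p →
      ∃ C : ℝ≥0∞, C < ⊤ ∧ ∀ v : E3,
        (∫⁻ u : E3, ENNReal.ofReal
          (Real.exp (-c * ‖v - u‖ ^ 2) * ‖v - u‖ ^ (κ - 2)
            * |⟪u, n⟫| ^ (-(β * p / (p - 1))))) ≤ C) := by
  refine ⟨fun a ha ha1 => lintegral_grazing_kernel_le hn hκ0 hκ1 hc ha ha1,
    fun p hp β hβ hβp => ?_⟩
  have hp1 : 0 < p - 1 := by linarith
  have ha1 : β * p / (p - 1) < 1 := by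
    rw [div_lt_one hp1]
    rw [lt_div_iff₀ (by linarith)] at hβp
    linarith
  obtain ⟨C, hC, hbound⟩ := lintegral_grazing_kernel_le hn hκ0 hκ1 hc (by positivity) ha1
  refine ⟨C, hC, fun v => le_of_eq_of_le ?_ (hbound v)⟩
  simp_rw [mul_comm (exp _)]

end
end
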